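/- If the γ-numbers of a (d-1)-dimensional homology sphere are all nonnegative, then j·h_j ≥ (d-j+1)·h_{j-1} for all j ≤ ⌊d/2⌋; equivalently h_{j-1}/C(d,j-1) ≤ h_j/C(d,j), i.e., Gal's conjecture implies the balanced GLBC inequalities. -/

import Mathlib

/-!
Each `γ_i t^i (1+t)^{d-2i}` contributes `γ_i C(d-2i, j-i)` to `h_j`, so it suffices to prove the
inequality term by term, where it is the binomial inequality
`(d-j+1) C(d-2i, j-1-i) ≤ j C(d-2i, j-i)`; the term `i = j` of `h_j` has no counterpart in
`h_{j-1}` and is nonnegative. The binomial inequality follows from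
`C(n, k+1) (k+1) = C(n, k) (n-k)`, after which it reduces to `i j ≤ i (d-j+1)`.
-/

open Finset

theorem Nat.mul_choose_le_mul_choose_succ {n k a b : ℕ} (h : a * (k + 1) ≤ b * (n - k)) :
    a * n.choose k ≤ b * n.choose (k + 1) := by
  refine Nat.le_of_mul_le_mul_right ?_ k.succ_pos
  calc a * n.choose k * (k + 1) = n.choose k * (a * (k + 1)) := by ring
    _ ≤ n.choose k * (b * (n - k)) := Nat.mul_le_mul_left _ h
    _ = b * (n.choose (k + 1) * (k + 1)) := by rw [Nat.choose_succ_right_eq]; ring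
    _ = b * n.choose (k + 1) * (k + 1) := by ring

theorem Nat.sub_add_one_mul_choose_le_mul_choose {d i j : ℕ} (hij : i < j) (hjd : 2 * j ≤ d + 1) :
    ((d : ℤ) - j + 1) * ((d - 2 * i).choose (j - 1 - i) : ℤ) ≤
      j * ((d - 2 * i).choose (j - i) : ℤ) := by
  have hscalar : (d - j + 1) * (j - 1 - i + 1) ≤ j * (d - 2 * i - (j - 1 - i)) := by
    obtain ⟨k, rfl⟩ : ∃ k, j = i + k + 1 := ⟨j - i - 1, by omega⟩
    obtain ⟨m, rfl⟩ : ∃ m, d = 2 * i + 2 * k + 1 + m := ⟨d - 2 * i - 2 * k - 1, by omega⟩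
    have h₁ : 2 * i + 2 * k + 1 + m - (i + k + 1) + 1 = i + k + 1 + m := by omega
    have h₂ : i + k + 1 - 1 - i + 1 = k + 1 := by omega
    have h₃ : 2 * i + 2 * k + 1 + m - 2 * i - (i + k + 1 - 1 - i) = k + m + 1 := by omega
    rw [h₁, h₂, h₃]
    nlinarith
  have key := Nat.mul_choose_le_mul_choose_succ hscalar
  rw [show j - 1 - i + 1 = j - i by omega] at key
  have hcast : ((d : ℤ) - j + 1) = ((d - j + 1 : ℕ) : ℤ) := by omega
  rw [hcast]
  exact_mod_cast key

/-- If the γ-numbers of a palindromic h-vector (e.g., of a flag homology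
sphere) are all nonnegative, then `j·h_j ≥ (d-j+1)·h_{j-1}` for all
`j ≤ ⌊d/2⌋`; i.e., Gal's conjecture implies the balanced GLBC inequalities
`h_{j-1}/C(d,j-1) ≤ h_j/C(d,j)`. Here `h_j = ∑_i γ_i C(d-2i, j-i)`. -/
theorem gamma_nonneg_implies_balanced_glbc (d : ℕ) (γ : ℕ → ℤ)
    (hγ : ∀ i, 0 ≤ γ i) (h : ℕ → ℤ)
    (hh : ∀ j, h j = ∑ i ∈ range (j + 1), γ i * ((d - 2 * i).choose (j - i) : ℤ)) :
    ∀ j, 1 ≤ j → j ≤ d / 2 →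
      ((d : ℤ) - j + 1) * h (j - 1) ≤ (j : ℤ) * h j := by
  intro j hj hjd
  rw [hh, hh, Nat.sub_add_cancel hj, mul_sum, mul_sum]
  calc ∑ i ∈ range j, ((d : ℤ) - j + 1) * (γ i * (d - 2 * i).choose (j - 1 - i))
      = ∑ i ∈ range j, γ i * (((d : ℤ) - j + 1) * (d - 2 * i).choose (j - 1 - i)) := by
        congr! 1 with i; ring
    _ ≤ ∑ i ∈ range j, γ i * ((j : ℤ) * (d - 2 * i).choose (j - i)) := by
        refine sum_le_sum fun i hi ↦ mul_le_mul_of_nonneg_left ?_ (hγ i)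
        exact Nat.sub_add_one_mul_choose_le_mul_choose (mem_range.mp hi) (by omega)
    _ ≤ ∑ i ∈ range (j + 1), γ i * ((j : ℤ) * (d - 2 * i).choose (j - i)) :=
        sum_le_sum_of_subset_of_nonneg (range_subset_range.mpr j.le_succ)
          fun i _ _ ↦ mul_nonneg (hγ i) (by positivity)
    _ = ∑ i ∈ range (j + 1), (j : ℤ) * (γ i * (d - 2 * i).choose (j - i)) := by
        congr! 1 with i; ring
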